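/- General trade-off bound: Let H : ℝ^d → ℝ^y satisfy K_L‖x₁-x₂‖ ≤ ‖H(x₁)-H(x₂)‖ ≤ K_U‖x₁-x₂‖ with 0 < K_L ≤ K_U. Let x, x₁, x₂ be random vectors drawn from a natural-image distribution with M = E[‖x₁-x₂‖], and δ ~ N(0, β²I_d) independent. Fix τ > 0 and set α_det = P[‖H(x)-H(x+δ)‖ ≤ τ], α_fp = P[‖H(x₁)-H(x₂)‖ ≤ τ], with α_fp < 1. Then α_det ≤ (1/Γ(d/2)) · γ(d/2, (1/2)·((K_U/K_L)·(M/β)·1/(1-α_fp))²). -/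

import Mathlib

open MeasureTheory ProbabilityTheory

/-- The lower incomplete gamma function `γ(s, x) = ∫₀ˣ t^(s-1) e^(-t) dt`. -/
noncomputable def lowerIncompleteGamma (s x : ℝ) : ℝ :=
  ∫ t in Set.Ioc 0 x, t ^ (s - 1) * Real.exp (-t)

/-!
The event `‖H x - H (x + δ)‖ ≤ τ` forces `‖δ‖ ≤ τ / K_L` by the lower Lipschitz bound, and `‖δ‖`
follows a chi distribution: integrating the radial Gaussian density in polar coordinates and
substituting `t = r² / (2β²)` gives `P[‖δ‖ ≤ c] = γ(d/2, c² / (2β²)) / Γ(d/2)`. On the other side,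
the upper Lipschitz bound and Markov's inequality give `τ (1 - α_fp) ≤ K_U M`, so `τ / K_L` is at
most `(K_U / K_L) M / (1 - α_fp)`, and `γ(d/2, ·)` is monotone.
-/

open Set Metric
open scoped ENNReal NNReal Real

theorem MeasureTheory.lintegral_pi_fin_prod_eq_prod {α : Type*} [MeasurableSpace α] {n : ℕ}
    (μ : Fin n → Measure α) [∀ i, SigmaFinite (μ i)] (f : Fin n → α → ℝ≥0∞)
    (hf : ∀ i, Measurable (f i)) :
    ∫⁻ x, ∏ i, f i (x i) ∂Measure.pi μ = ∏ i, ∫⁻ a, f i a ∂μ i := by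
  induction n with
  | zero => simp
  | succ n ih =>
    rw [← ((measurePreserving_piFinSuccAbove μ 0).symm).lintegral_comp_emb
      (MeasurableEquiv.measurableEmbedding _)]
    simp only [MeasurableEquiv.piFinSuccAbove_symm_apply, Fin.prod_univ_succ,
      Fin.insertNthEquiv_zero, Fin.consEquiv_apply, Fin.cons_zero, Fin.cons_succ,
      Fin.zero_succAbove]
    rw [lintegral_prod_mul (g := fun x : Fin n → α => ∏ i, f i.succ (x i)) (hf 0).aemeasurable
      (Finset.measurable_prod _ fun i _ => (hf i.succ).comp (measurable_pi_apply i)).aemeasurable,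
      ih _ _ fun i => hf i.succ]

theorem MeasureTheory.Measure.pi_withDensity {α : Type*} [MeasurableSpace α] {n : ℕ}
    (μ : Fin n → Measure α) [∀ i, SigmaFinite (μ i)] (f : Fin n → α → ℝ≥0∞)
    (hf : ∀ i, Measurable (f i)) [∀ i, SigmaFinite ((μ i).withDensity (f i))] :
    Measure.pi (fun i => (μ i).withDensity (f i))
      = (Measure.pi μ).withDensity (fun x => ∏ i, f i (x i)) := by
  refine Measure.pi_eq fun s hs => ?_
  rw [withDensity_apply _ (.univ_pi hs), Measure.restrict_pi_pi,
    lintegral_pi_fin_prod_eq_prod _ _ hf]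
  simp only [withDensity_apply _ (hs _)]

theorem MeasureTheory.MeasurePreserving.map_withDensity {α β : Type*} [MeasurableSpace α]
    [MeasurableSpace β] {μ : Measure α} {ν : Measure β} {e : α ≃ᵐ β}
    (he : MeasurePreserving e μ ν) (f : α → ℝ≥0∞) :
    (μ.withDensity f).map e = ν.withDensity (f ∘ e.symm) := by
  ext s hs
  rw [Measure.map_apply e.measurable hs, withDensity_apply _ (e.measurable hs),
    withDensity_apply _ hs, ← he.setLIntegral_comp_preimage_emb e.measurableEmbedding]
  simp

theorem MeasureTheory.measureReal_withDensity_ofReal {α : Type*} [MeasurableSpace α]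
    {μ : Measure α} [SFinite μ] {f : α → ℝ} (hf : Integrable f μ) (hf0 : 0 ≤ f) (s : Set α) :
    (μ.withDensity fun x => ENNReal.ofReal (f x)).real s = ∫ x in s, f x ∂μ := by
  rw [measureReal_def, withDensity_apply' _ s,
    ← ofReal_integral_eq_lintegral_ofReal hf.integrableOn (.of_forall fun x => hf0 x),
    ENNReal.toReal_ofReal (integral_nonneg fun x => hf0 x)]

theorem prod_gaussianPDF_eq {d : ℕ} (V : ℝ≥0) (w : EuclideanSpace ℝ (Fin d)) :
    ∏ i, gaussianPDF 0 V (w i)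
      = ENNReal.ofReal ((√(2 * π * V))⁻¹ ^ d * Real.exp (-‖w‖ ^ 2 / (2 * V))) := by
  simp only [gaussianPDF,
    ← ENNReal.ofReal_prod_of_nonneg fun i _ => gaussianPDFReal_nonneg 0 V (w i)]
  simp only [EuclideanSpace.norm_sq_eq, gaussianPDFReal, sub_zero, Finset.prod_mul_distrib,
    Finset.prod_const, Finset.card_univ, Fintype.card_fin, ← Real.exp_sum, Real.norm_eq_abs, sq_abs,
    Finset.sum_div, Finset.sum_neg_distrib, neg_div]

theorem map_eq_withDensity_of_iIndepFun_gaussianReal {Ω : Type*} [MeasurableSpace Ω]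
    {P : Measure Ω} [IsProbabilityMeasure P] {d : ℕ} {V : ℝ≥0} (hV : V ≠ 0)
    {δ : Ω → EuclideanSpace ℝ (Fin d)} (hmeas : ∀ i, Measurable fun ω => δ ω i)
    (hindep : iIndepFun (fun i ω => δ ω i) P)
    (hdist : ∀ i, P.map (fun ω => δ ω i) = gaussianReal 0 V) :
    P.map δ = volume.withDensity
      fun w => ENNReal.ofReal ((√(2 * π * V))⁻¹ ^ d * Real.exp (-‖w‖ ^ 2 / (2 * V))) := by
  have hcoord : P.map (fun ω i => δ ω i) = (volume : Measure (Fin d → ℝ)).withDensity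
      fun x => ∏ i, gaussianPDF 0 V (x i) := by
    rw [(iIndepFun_iff_map_fun_eq_pi_map fun i => (hmeas i).aemeasurable).1 hindep]
    have : SigmaFinite (volume.withDensity (gaussianPDF 0 V)) := by
      rw [← gaussianReal_of_var_ne_zero 0 hV]; infer_instance
    simp only [hdist, gaussianReal_of_var_ne_zero 0 hV]
    exact Measure.pi_withDensity _ _ fun _ => measurable_gaussianPDF 0 V
  have hδ : δ = MeasurableEquiv.toLp 2 (Fin d → ℝ) ∘ fun ω i => δ ω i := rfl
  have hLp : MeasurePreserving (MeasurableEquiv.toLp 2 (Fin d → ℝ)) :=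
    (EuclideanSpace.volume_preserving_symm_measurableEquiv_toLp (Fin d)).symm
  rw [hδ, ← Measure.map_map (MeasurableEquiv.measurable _) (measurable_pi_lambda _ hmeas), hcoord,
    hLp.map_withDensity]
  simp only [Function.comp_def, ← prod_gaussianPDF_eq]
  rfl

theorem measureReal_closedBall_eq_div_of_radial_density {E : Type*} [NormedAddCommGroup E]
    [NormedSpace ℝ E] [Nontrivial E] [FiniteDimensional ℝ E] [MeasurableSpace E] [BorelSpace E]
    (μ : Measure E) [μ.IsAddHaarMeasure] {f : ℝ → ℝ} (hf : Measurable f) (hf0 : 0 ≤ f)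
    [IsProbabilityMeasure (μ.withDensity fun x => ENNReal.ofReal (f ‖x‖))] (c : ℝ) :
    (μ.withDensity fun x => ENNReal.ofReal (f ‖x‖)).real (closedBall 0 c)
      = (∫ r in Ioc 0 c, r ^ (Module.finrank ℝ E - 1) * f r)
          / ∫ r in Ioi 0, r ^ (Module.finrank ℝ E - 1) * f r := by
  set ν := μ.withDensity fun x => ENNReal.ofReal (f ‖x‖)
  have hint : Integrable (fun x => f ‖x‖) μ := by
    refine (lintegral_ofReal_ne_top_iff_integrable (hf.comp measurable_norm).aestronglyMeasurable
      (.of_forall fun x => hf0 _)).1 ?_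
    simpa [ν, withDensity_apply _ MeasurableSet.univ] using measure_ne_top ν univ
  set K := Module.finrank ℝ E • μ.real (ball 0 1)
  have hpolar (g : ℝ → ℝ) :
      ∫ x, g ‖x‖ ∂μ = K * ∫ r in Ioi 0, r ^ (Module.finrank ℝ E - 1) * g r := by
    simp [integral_fun_norm_addHaar μ g, K, smul_eq_mul, mul_assoc]
  -- `K` (the volume of the unit ball up to the factor `dim E`) is pinned down by the total mass.
  have htotal : K * ∫ r in Ioi 0, r ^ (Module.finrank ℝ E - 1) * f r = 1 := by
    have := measureReal_withDensity_ofReal hint (fun x => hf0 _) univ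
    rw [probReal_univ, Measure.restrict_univ, hpolar] at this
    simpa [smul_eq_mul, K] using this.symm
  have hball : ν.real (closedBall 0 c)
      = K * ∫ r in Ioc 0 c, r ^ (Module.finrank ℝ E - 1) * f r := by
    have hind : (closedBall (0 : E) c).indicator (fun x => f ‖x‖)
        = fun x => (Iic c).indicator f ‖x‖ := by
      ext x
      simp only [indicator, mem_closedBall_zero_iff, mem_Iic]
    rw [measureReal_withDensity_ofReal hint (fun x => hf0 _),
      ← integral_indicator measurableSet_closedBall, hind, hpolar]
    simp only [← indicator_mul_right _ fun r : ℝ => r ^ (Module.finrank ℝ E - 1)]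
    rw [setIntegral_indicator measurableSet_Iic, Ioi_inter_Iic]
  rw [hball, eq_div_iff (right_ne_zero_of_mul_eq_one htotal)]
  linear_combination (∫ r in Ioc 0 c, r ^ (Module.finrank ℝ E - 1) * f r) * htotal

theorem strictMonoOn_sq_div {σ : ℝ} (hσ : 0 < σ) :
    StrictMonoOn (fun r : ℝ => r ^ 2 / σ) (Ici 0) := fun a ha b hb hab => by
  dsimp only
  gcongr

theorem setIntegral_pow_mul_exp_neg_sq_div {n : ℕ} (hn : 0 < n) {σ : ℝ} (hσ : 0 < σ) {s : Set ℝ}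
    (hs : MeasurableSet s) (hs0 : s ⊆ Ioi 0) :
    ∫ r in s, r ^ (n - 1) * Real.exp (-r ^ 2 / σ)
      = σ ^ ((n : ℝ) / 2) / 2
          * ∫ t in (fun r => r ^ 2 / σ) '' s, t ^ ((n : ℝ) / 2 - 1) * Real.exp (-t) := by
  have hderiv : ∀ r ∈ s, HasDerivWithinAt (fun r : ℝ => r ^ 2 / σ) (2 * r / σ) s r := fun r _ => by
    simpa using ((hasDerivAt_pow 2 r).div_const σ).hasDerivWithinAt
  rw [integral_image_eq_integral_abs_deriv_smul hs hderiv
    ((strictMonoOn_sq_div hσ).injOn.mono (hs0.trans Ioi_subset_Ici_self)),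
    ← integral_const_mul]
  refine setIntegral_congr_fun hs fun r hr => ?_
  have hr : 0 < r := hs0 hr
  have hpow : (r ^ 2 / σ) ^ ((n : ℝ) / 2 - 1) = r ^ n / σ ^ ((n : ℝ) / 2) / (r ^ 2 / σ) := by
    rw [Real.rpow_sub_one (by positivity), Real.div_rpow (by positivity) hσ.le,
      ← Real.rpow_natCast_mul hr.le, show ((2 : ℕ) : ℝ) * (n / 2) = n by push_cast; ring,
      Real.rpow_natCast]
  obtain ⟨m, rfl⟩ : ∃ m, n = m + 1 := ⟨n - 1, by omega⟩
  rw [smul_eq_mul, abs_of_pos (by positivity), hpow, Nat.add_sub_cancel]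
  field_simp
  ring

theorem integral_Ioc_pow_mul_exp_neg_sq_div {n : ℕ} (hn : 0 < n) {σ : ℝ} (hσ : 0 < σ) {c : ℝ}
    (hc : 0 ≤ c) :
    ∫ r in Ioc 0 c, r ^ (n - 1) * Real.exp (-r ^ 2 / σ)
      = σ ^ ((n : ℝ) / 2) / 2 * lowerIncompleteGamma ((n : ℝ) / 2) (c ^ 2 / σ) := by
  rw [setIntegral_pow_mul_exp_neg_sq_div hn hσ measurableSet_Ioc Ioc_subset_Ioi_self,
    (by fun_prop : Continuous fun r : ℝ => r ^ 2 / σ).continuousOn.image_Ioc_of_strictMonoOn hc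
      ((strictMonoOn_sq_div hσ).mono Icc_subset_Ici_self)]
  simp [lowerIncompleteGamma]

theorem integral_Ioi_pow_mul_exp_neg_sq_div {n : ℕ} (hn : 0 < n) {σ : ℝ} (hσ : 0 < σ) :
    ∫ r in Ioi 0, r ^ (n - 1) * Real.exp (-r ^ 2 / σ)
      = σ ^ ((n : ℝ) / 2) / 2 * Real.Gamma ((n : ℝ) / 2) := by
  rw [setIntegral_pow_mul_exp_neg_sq_div hn hσ measurableSet_Ioi subset_rfl,
    (by fun_prop : Continuous fun r : ℝ => r ^ 2 / σ).continuousOn.image_Ioi_of_strictMonoOn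
      (strictMonoOn_sq_div hσ) ((Filter.tendsto_pow_atTop two_ne_zero).atTop_div_const hσ),
    Real.Gamma_eq_integral (by positivity)]
  simp [mul_comm]

theorem lowerIncompleteGamma_mono {s : ℝ} (hs : 0 < s) : Monotone (lowerIncompleteGamma s) :=
  fun a b hab => by
  have hint : IntegrableOn (fun t : ℝ => t ^ (s - 1) * Real.exp (-t)) (Ioc 0 b) := by
    refine ((Real.GammaIntegral_convergent hs).mono_set Ioc_subset_Ioi_self).congr ?_
    exact ae_of_all _ fun t => mul_comm _ _
  refine setIntegral_mono_set hint ?_ (Ioc_subset_Ioc_right hab).eventuallyLE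
  filter_upwards [ae_restrict_mem measurableSet_Ioc] with t ht
  exact mul_nonneg (Real.rpow_nonneg ht.1.le _) (Real.exp_nonneg _)

theorem measureReal_norm_le_of_iIndepFun_gaussianReal {Ω : Type*} [MeasurableSpace Ω]
    {P : Measure Ω} [IsProbabilityMeasure P] {d : ℕ} (hd : 0 < d) {V : ℝ≥0} (hV : V ≠ 0)
    {δ : Ω → EuclideanSpace ℝ (Fin d)} (hmeas : ∀ i, Measurable fun ω => δ ω i)
    (hindep : iIndepFun (fun i ω => δ ω i) P)
    (hdist : ∀ i, P.map (fun ω => δ ω i) = gaussianReal 0 V) {c : ℝ} (hc : 0 ≤ c) :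
    P.real {ω | ‖δ ω‖ ≤ c}
      = lowerIncompleteGamma ((d : ℝ) / 2) (c ^ 2 / (2 * V)) / Real.Gamma ((d : ℝ) / 2) := by
  have hσ : (0 : ℝ) < 2 * V := by positivity
  have hlaw := map_eq_withDensity_of_iIndepFun_gaussianReal hV hmeas hindep hdist
  have hδ : Measurable δ :=
    (MeasurableEquiv.toLp 2 (Fin d → ℝ)).measurable.comp (measurable_pi_lambda _ hmeas)
  have : Nonempty (Fin d) := ⟨⟨0, hd⟩⟩
  set C : ℝ := (√(2 * π * V))⁻¹ ^ d
  have hC : C ≠ 0 := by positivity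
  have : IsProbabilityMeasure (P.map δ) := Measure.isProbabilityMeasure_map hδ.aemeasurable
  rw [hlaw] at this
  have hball := measureReal_closedBall_eq_div_of_radial_density
    (volume : Measure (EuclideanSpace ℝ (Fin d)))
    (f := fun r => C * Real.exp (-r ^ 2 / (2 * V))) (by fun_prop) (fun r => by positivity) c
  simp only [← hlaw, finrank_euclideanSpace_fin, mul_left_comm _ C, integral_const_mul,
    mul_div_mul_left _ _ hC, integral_Ioc_pow_mul_exp_neg_sq_div hd hσ hc,
    integral_Ioi_pow_mul_exp_neg_sq_div hd hσ] at hball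
  rw [map_measureReal_apply hδ measurableSet_closedBall,
    mul_div_mul_left _ _ (by positivity)] at hball
  simpa [preimage, mem_closedBall_zero_iff] using hball

theorem mul_one_sub_measureReal_le_integral {Ω : Type*} [MeasurableSpace Ω] {P : Measure Ω}
    [IsProbabilityMeasure P] {X : Ω → ℝ} (hX : 0 ≤ X) (hint : Integrable X P) {t : ℝ}
    (ht : 0 ≤ t) {A : Set Ω} (hA : {ω | X ω < t} ⊆ A) :
    t * (1 - P.real A) ≤ ∫ ω, X ω ∂P := by
  have hcover : 1 ≤ P.real A + P.real {ω | t ≤ X ω} := by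
    calc 1 = P.real univ := probReal_univ.symm
      _ ≤ P.real (A ∪ {ω | t ≤ X ω}) := measureReal_mono fun ω _ => by
        by_cases h : X ω < t
        · exact Or.inl (hA h)
        · exact Or.inr (not_lt.1 h)
      _ ≤ _ := measureReal_union_le _ _
  calc t * (1 - P.real A) ≤ t * P.real {ω | t ≤ X ω} := by gcongr; linarith
    _ ≤ ∫ ω, X ω ∂P := mul_meas_ge_le_integral_of_nonneg (.of_forall hX) hint t

theorem statement6_general {Ω : Type*} [MeasureSpace Ω] [IsProbabilityMeasure (ℙ : Measure Ω)]
    {d y : ℕ} (hd : 0 < d) {β : ℝ} (hβ : 0 < β)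
    (H : EuclideanSpace ℝ (Fin d) → EuclideanSpace ℝ (Fin y))
    (KL KU : ℝ) (hKL : 0 < KL) (hKLU : KL ≤ KU)
    (hlip : ∀ u v : EuclideanSpace ℝ (Fin d),
      KL * ‖u - v‖ ≤ ‖H u - H v‖ ∧ ‖H u - H v‖ ≤ KU * ‖u - v‖)
    (x x₁ x₂ δ : Ω → EuclideanSpace ℝ (Fin d))
    (hδmeas : ∀ i, Measurable fun ω => δ ω i)
    (hδindep : iIndepFun (fun i ω => δ ω i) ℙ)
    (hδdist : ∀ i, Measure.map (fun ω => δ ω i) ℙ = gaussianReal 0 (β ^ 2).toNNReal)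
    (hint : Integrable (fun ω => ‖x₁ ω - x₂ ω‖) ℙ)
    (M : ℝ) (hM : M = ∫ ω, ‖x₁ ω - x₂ ω‖)
    (τ : ℝ) (hτ : 0 < τ) (αdet αfp : ℝ)
    (hαdet : αdet = (ℙ {ω | ‖H (x ω) - H (x ω + δ ω)‖ ≤ τ}).toReal)
    (hαfp : αfp = (ℙ {ω | ‖H (x₁ ω) - H (x₂ ω)‖ ≤ τ}).toReal)
    (hαfp1 : αfp < 1) :
    αdet ≤ lowerIncompleteGamma (d / 2)
        ((KU / KL * (M / β) * (1 / (1 - αfp))) ^ 2 / 2) / Real.Gamma (d / 2) := by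
  have hKU : 0 < KU := hKL.trans_le hKLU
  have hgap : 0 < 1 - αfp := by linarith
  have hc : 0 ≤ τ / KL := by positivity
  have hmarkov : τ / KU * (1 - αfp) ≤ M := by
    rw [hαfp, ← measureReal_def, hM]
    refine mul_one_sub_measureReal_le_integral (fun ω => norm_nonneg _) hint (by positivity)
      fun ω hω => ((hlip (x₁ ω) (x₂ ω)).2.trans ?_)
    exact ((lt_div_iff₀' hKU).1 hω).le
  have hτM : τ ≤ KU * M / (1 - αfp) := by
    rw [le_div_iff₀ hgap, ← div_le_iff₀' hKU, mul_div_right_comm]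
    exact hmarkov
  have harg : (τ / KL) ^ 2 / (2 * (β ^ 2).toNNReal)
      ≤ (KU / KL * (M / β) * (1 / (1 - αfp))) ^ 2 / 2 :=
    calc (τ / KL) ^ 2 / (2 * (β ^ 2).toNNReal) = (τ / KL / β) ^ 2 / 2 := by
          rw [Real.coe_toNNReal _ (sq_nonneg β)]; field_simp
      _ ≤ (KU * M / (1 - αfp) / KL / β) ^ 2 / 2 := by gcongr
      _ = (KU / KL * (M / β) * (1 / (1 - αfp))) ^ 2 / 2 := by ring
  calc αdet ≤ (ℙ : Measure Ω).real {ω | ‖δ ω‖ ≤ τ / KL} := by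
        rw [hαdet, ← measureReal_def]
        refine measureReal_mono fun ω hω => ?_
        have hlow := (hlip (x ω) (x ω + δ ω)).1
        rw [sub_add_cancel_left, norm_neg] at hlow
        exact (le_div_iff₀' hKL).2 (hlow.trans hω)
    _ = lowerIncompleteGamma (d / 2) ((τ / KL) ^ 2 / (2 * (β ^ 2).toNNReal)) / Real.Gamma (d / 2) :=
      measureReal_norm_le_of_iIndepFun_gaussianReal hd (by simp [hβ.ne']) hδmeas hδindep hδdist hc
    _ ≤ _ := by
      gcongr
      exact lowerIncompleteGamma_mono (by positivity) harg

/-- General trade-off bound: for a bi-Lipschitz feature extractor `H` with constants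
`0 < K_L ≤ K_U`, natural queries `x, x₁, x₂` with `M = E[‖x₁ - x₂‖]`, Gaussian perturbation
`δ ~ N(0, β² I_d)`, threshold `τ > 0`, detection rate `α_det = P[‖H(x) - H(x+δ)‖ ≤ τ]`
and false positive rate `α_fp = P[‖H(x₁) - H(x₂)‖ ≤ τ] < 1`:
`α_det ≤ γ(d/2, ((K_U/K_L)·(M/β)/(1-α_fp))²/2) / Γ(d/2)`. -/
theorem statement6 {Ω : Type*} [MeasureSpace Ω] [IsProbabilityMeasure (ℙ : Measure Ω)]
    {d y : ℕ} (hd : 0 < d) {β : ℝ} (hβ : 0 < β)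
    (H : EuclideanSpace ℝ (Fin d) → EuclideanSpace ℝ (Fin y))
    (KL KU : ℝ) (hKL : 0 < KL) (hKLU : KL ≤ KU)
    (hlip : ∀ u v : EuclideanSpace ℝ (Fin d),
      KL * ‖u - v‖ ≤ ‖H u - H v‖ ∧ ‖H u - H v‖ ≤ KU * ‖u - v‖)
    (x x₁ x₂ δ : Ω → EuclideanSpace ℝ (Fin d))
    (hδmeas : ∀ i, Measurable fun ω => δ ω i)
    (hδindep : iIndepFun (fun i ω => δ ω i) ℙ)
    (hδdist : ∀ i, Measure.map (fun ω => δ ω i) ℙ = gaussianReal 0 (β ^ 2).toNNReal)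
    (hxmeas : Measurable fun ω => ‖x₁ ω - x₂ ω‖)
    (hint : Integrable (fun ω => ‖x₁ ω - x₂ ω‖) ℙ)
    (M : ℝ) (hM : M = ∫ ω, ‖x₁ ω - x₂ ω‖)
    (τ : ℝ) (hτ : 0 < τ) (αdet αfp : ℝ)
    (hαdet : αdet = (ℙ {ω | ‖H (x ω) - H (x ω + δ ω)‖ ≤ τ}).toReal)
    (hαfp : αfp = (ℙ {ω | ‖H (x₁ ω) - H (x₂ ω)‖ ≤ τ}).toReal)
    (hαfp1 : αfp < 1) :
    αdet ≤ lowerIncompleteGamma (d / 2)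
        ((KU / KL * (M / β) * (1 / (1 - αfp))) ^ 2 / 2) / Real.Gamma (d / 2) :=
  statement6_general hd hβ H KL KU hKL hKLU hlip x x₁ x₂ δ hδmeas hδindep hδdist hint M hM τ hτ αdet
    αfp hαdet hαfp hαfp1
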